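/- (Joints theorem for polynomial curves) Let 𝓒 be a finite collection of smooth curves in ℝ^n, each parametrized by polynomials of degree at most d. Then the number of joints of 𝓒 (points where n curves of 𝓒 meet with linearly independent tangent vectors) is at most C_n · |𝓒|^(n/(n-1)) · d^(n/(n-1)), for a constant C_n depending only on n. -/

import Mathlib

open MvPolynomial

/-- A polynomially parametrized curve in ℝⁿ. -/
structure PolyCurve (n : ℕ) where
  P : Fin n → Polynomial ℝ

/-- The point of the curve at parameter `t`. -/
def PolyCurve.eval {n : ℕ} (γ : PolyCurve n) (t : ℝ) : Fin n → ℝ :=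
  fun i => (γ.P i).eval t

/-- The tangent vector of the curve at parameter `t`. -/
noncomputable def PolyCurve.tangent {n : ℕ} (γ : PolyCurve n) (t : ℝ) : Fin n → ℝ :=
  fun i => (Polynomial.derivative (γ.P i)).eval t

/-- The curve is smooth: its tangent vector never vanishes. -/
def PolyCurve.Smooth {n : ℕ} (γ : PolyCurve n) : Prop :=
  ∀ t : ℝ, γ.tangent t ≠ 0

/-- All coordinate polynomials have degree at most `d`. -/
def PolyCurve.DegLE {n : ℕ} (γ : PolyCurve n) (d : ℕ) : Prop :=
  ∀ i, (γ.P i).natDegree ≤ d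

/-- The set of points of the curve. -/
def PolyCurve.carrier {n : ℕ} (γ : PolyCurve n) : Set (Fin n → ℝ) :=
  {x | ∃ t : ℝ, γ.eval t = x}

/-- `x` is a joint of the collection of curves `𝓒`: there are `n` curves of `𝓒`
passing through `x` whose tangent vectors at `x` are linearly independent. -/
def IsCurveJoint {n : ℕ} (𝓒 : Finset (PolyCurve n)) (x : Fin n → ℝ) : Prop :=
  ∃ (g : Fin n → PolyCurve n) (τ : Fin n → ℝ),
    (∀ i, g i ∈ 𝓒) ∧ (∀ i, (g i).eval (τ i) = x) ∧
      LinearIndependent ℝ (fun i => (g i).tangent (τ i))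

/-! Polynomial method. If `k` points are joints, a nonzero polynomial `g` of degree at most
`n D` vanishes on them as soon as `k < (D + 1) ^ n`. Suppose every curve met more than `d · deg g`
of these joints. Then `g` vanishes identically along every curve, so by the chain rule
`∇g(x)` is orthogonal to the `n` independent tangents at each joint `x`, i.e. every `∂ⱼ g`
vanishes on the joints as well; induction on the degree then forces `g = 0`. Hence some curve
carries at most `d · deg g` joints; removing it and repeating gives `k ≤ |𝓒| · d · n D`, and the
choice `D = ⌊k ^ (1 / n)⌋` turns this into `k ≤ (n |𝓒| d) ^ (n / (n - 1))`. -/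

open Finset

namespace MvPolynomial

variable {σ R K : Type*}

theorem derivative_aeval [CommSemiring R] [Fintype σ] (p : σ → Polynomial R)
    (g : MvPolynomial σ R) :
    Polynomial.derivative (aeval p g) =
      ∑ j, aeval p (pderiv j g) * Polynomial.derivative (p j) := by
  classical
  induction g using MvPolynomial.induction_on with
  | C a => simp
  | add f g hf hg => simp only [map_add, add_mul, Finset.sum_add_distrib, hf, hg]
  | mul_X f i hf =>
    simp [pderiv_X, Pi.single_apply, apply_ite, Polynomial.derivative_mul, hf, add_mul,
      Finset.sum_add_distrib, Finset.mul_sum, mul_comm, mul_assoc]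

theorem natDegree_aeval_le [CommSemiring R] {d : ℕ} (p : σ → Polynomial R)
    (hp : ∀ i, (p i).natDegree ≤ d) (g : MvPolynomial σ R) :
    (aeval p g).natDegree ≤ g.totalDegree * d := by
  rw [aeval_def, eval₂_eq]
  refine Polynomial.natDegree_sum_le_of_forall_le _ _ fun s hs => ?_
  calc _ ≤ ∑ i ∈ s.support, (p i ^ s i).natDegree :=
        (Polynomial.natDegree_C_mul_le _ _).trans (Polynomial.natDegree_prod_le _ _)
    _ ≤ ∑ i ∈ s.support, s i * d :=
        Finset.sum_le_sum fun i _ => Polynomial.natDegree_pow_le_of_le _ (hp i)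
    _ = (s.sum fun _ e => e) * d := (Finset.sum_mul ..).symm
    _ ≤ g.totalDegree * d := Nat.mul_le_mul_right _ (le_totalDegree hs)

theorem totalDegree_pderiv_le [CommSemiring R] (i : σ) (g : MvPolynomial σ R) :
    (pderiv i g).totalDegree ≤ g.totalDegree - 1 := by
  classical
  refine Finset.sup_le fun m hm => ?_
  have hcoeff : coeff (m + Finsupp.single i 1) g ≠ 0 := by
    intro h
    exact mem_support_iff.mp hm (by rw [coeff_pderiv, h, zero_mul])
  have := le_totalDegree (mem_support_iff.mpr hcoeff)
  rw [Finsupp.sum_add_index' (fun _ => rfl) (fun _ _ _ => rfl), Finsupp.sum_single_index rfl]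
    at this
  omega

theorem eq_C_of_forall_pderiv_eq_zero [CommSemiring R] [NoZeroDivisors R] [CharZero R]
    {g : MvPolynomial σ R} (h : ∀ i, pderiv i g = 0) : g = C (g.coeff 0) := by
  classical
  ext s
  rw [coeff_C]
  split_ifs with hs
  · rw [hs]
  obtain ⟨i, hi⟩ : ∃ i, s i ≠ 0 := by
    by_contra! h0
    exact hs (Finsupp.ext h0).symm
  have hle : Finsupp.single i 1 ≤ s := Finsupp.single_le_iff.mpr (Nat.one_le_iff_ne_zero.mpr hi)
  have := coeff_pderiv (i := i) g (s - Finsupp.single i 1)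
  rw [h i, coeff_zero, tsub_add_cancel_of_le hle, eq_comm, mul_eq_zero] at this
  exact this.resolve_right (Nat.cast_add_one_ne_zero _)

theorem exists_ne_zero_totalDegree_le_forall_eval_eq_zero [Field K] [Fintype σ]
    (S : Finset (σ → K)) {D : ℕ} (hS : #S < (D + 1) ^ Fintype.card σ) :
    ∃ g : MvPolynomial σ K, g ≠ 0 ∧ g.totalDegree ≤ Fintype.card σ * D ∧
      ∀ x ∈ S, eval x g = 0 := by
  classical
  let exponent : (σ → Fin (D + 1)) → σ →₀ ℕ := fun a =>
    Finsupp.equivFunOnFinite.symm fun i => a i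
  have exponent_injective : Function.Injective exponent := by
    intro a b hab
    funext i
    exact Fin.ext (by simpa [exponent] using DFunLike.congr_fun hab i)
  let V := Submodule.span K (Set.range (basisMonomials σ K ∘ exponent))
  have : FiniteDimensional K V := FiniteDimensional.span_of_finite K (Set.finite_range _)
  have hV : Module.finrank K V = (D + 1) ^ Fintype.card σ := by
    rw [finrank_span_eq_card ((basisMonomials σ K).linearIndependent.comp _ exponent_injective)]
    simp
  have hV_deg : V ≤ restrictTotalDegree σ K (Fintype.card σ * D) := by
    refine Submodule.span_le.mpr (Set.range_subset_iff.mpr fun a => ?_)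
    rw [Function.comp_apply, coe_basisMonomials, SetLike.mem_coe, mem_restrictTotalDegree,
      totalDegree_monomial _ one_ne_zero, Finsupp.sum_fintype _ _ fun _ => rfl]
    calc ∑ i, exponent a i = ∑ i, (a i : ℕ) := rfl
      _ ≤ ∑ _i : σ, D := Finset.sum_le_sum fun i _ => Fin.is_le (a i)
      _ = Fintype.card σ * D := by simp
  let evalOn : V →ₗ[K] S → K :=
    (LinearMap.pi fun x : S => (aeval x.1).toLinearMap).domRestrict V
  obtain ⟨g, hg_ker, hg⟩ := Submodule.exists_mem_ne_zero_of_ne_bot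
    (LinearMap.ker_ne_bot_of_finrank_lt (f := evalOn) (by simpa [hV] using hS))
  refine ⟨g, by simpa using hg, (mem_restrictTotalDegree ..).mp (hV_deg g.2), fun x hx => ?_⟩
  simpa [evalOn] using congrFun (LinearMap.mem_ker.mp hg_ker) ⟨x, hx⟩

end MvPolynomial

theorem LinearIndependent.eq_zero_of_forall_dotProduct_eq_zero {K ι : Type*} [Field K]
    [Fintype ι] [DecidableEq ι] {v : ι → ι → K} (hv : LinearIndependent K v) {w : ι → K}
    (h : ∀ i, v i ⬝ᵥ w = 0) : w = 0 :=
  Matrix.mulVec_injective_iff_isUnit.mpr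
    (Matrix.linearIndependent_rows_iff_isUnit (A := Matrix.of v) |>.mp hv)
    (by ext i; simp [Matrix.mulVec, h])

namespace PolyCurve

variable {n d : ℕ}

theorem eval_aeval (γ : PolyCurve n) (g : MvPolynomial (Fin n) ℝ) (t : ℝ) :
    (aeval γ.P g).eval t = MvPolynomial.eval (γ.eval t) g := by
  rw [← Polynomial.coe_aeval_eq_eval, comp_aeval_apply, ← coe_aeval_eq_eval]
  rfl

theorem eval_derivative_aeval (γ : PolyCurve n) (g : MvPolynomial (Fin n) ℝ) (t : ℝ) :
    (Polynomial.derivative (aeval γ.P g)).eval t =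
      γ.tangent t ⬝ᵥ fun j => MvPolynomial.eval (γ.eval t) (pderiv j g) := by
  simp [derivative_aeval, Polynomial.eval_finsetSum, dotProduct, eval_aeval, tangent, mul_comm]

theorem aeval_eq_zero_of_totalDegree_mul_lt_card {γ : PolyCurve n} (hγ : γ.DegLE d)
    {g : MvPolynomial (Fin n) ℝ} {F : Finset (Fin n → ℝ)}
    (hF : ∀ x ∈ F, x ∈ γ.carrier ∧ MvPolynomial.eval x g = 0) (hcard : g.totalDegree * d < #F) :
    aeval γ.P g = 0 := by
  choose! param hparam using fun x hx => (hF x hx).1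
  have hinj : Set.InjOn param F := fun x hx y hy h => by rw [← hparam x hx, ← hparam y hy, h]
  refine Polynomial.eq_zero_of_natDegree_lt_card_of_eval_eq_zero' _ (F.image param) ?_ ?_
  · simp only [mem_image, forall_exists_index, and_imp]
    rintro _ x hx rfl
    rw [eval_aeval, hparam x hx]
    exact (hF x hx).2
  · rw [card_image_of_injOn hinj]
    exact (natDegree_aeval_le _ hγ g).trans_lt hcard

end PolyCurve

variable {n d : ℕ}

theorem IsCurveJoint.eval_pderiv_eq_zero {𝓒 : Finset (PolyCurve n)} {x : Fin n → ℝ}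
    (hx : IsCurveJoint 𝓒 x) {g : MvPolynomial (Fin n) ℝ} (hg : ∀ γ ∈ 𝓒, aeval γ.P g = 0)
    (j : Fin n) : eval x (pderiv j g) = 0 := by
  obtain ⟨c, τ, hc, hcx, hli⟩ := hx
  refine congrFun (hli.eq_zero_of_forall_dotProduct_eq_zero
    (w := fun j => eval x (pderiv j g)) fun i => ?_) j
  rw [← hcx i, ← PolyCurve.eval_derivative_aeval, hg _ (hc i), map_zero, Polynomial.eval_zero]

open Classical in
theorem eq_zero_of_vanishes_on_joints {𝓒 : Finset (PolyCurve n)} (hdeg : ∀ γ ∈ 𝓒, γ.DegLE d)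
    {S : Finset (Fin n → ℝ)} (hS : ∀ x ∈ S, IsCurveJoint 𝓒 x) (hne : S.Nonempty)
    (g : MvPolynomial (Fin n) ℝ) (hg : ∀ x ∈ S, eval x g = 0)
    (hmany : ∀ γ ∈ 𝓒, g.totalDegree * d < #{x ∈ S | x ∈ γ.carrier}) : g = 0 := by
  induction hk : g.totalDegree using Nat.strong_induction_on generalizing g with
  | _ k IH =>
  have hgrad (j : Fin n) : ∀ x ∈ S, eval x (pderiv j g) = 0 := fun x hx =>
    (hS x hx).eval_pderiv_eq_zero (fun γ hγ => PolyCurve.aeval_eq_zero_of_totalDegree_mul_lt_card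
      (hdeg γ hγ) (by simpa using fun y hy hyγ => ⟨hyγ, hg y hy⟩) (hmany γ hγ)) j
  have hconst : g = C (g.coeff 0) := by
    rcases Nat.eq_zero_or_pos k with rfl | hk_pos
    · exact totalDegree_eq_zero_iff_eq_C.mp hk
    refine eq_C_of_forall_pderiv_eq_zero fun j => IH _ ?_ _ (hgrad j) (fun γ hγ => ?_) rfl
    · have := totalDegree_pderiv_le j g
      omega
    · exact (Nat.mul_le_mul_right d ((totalDegree_pderiv_le j g).trans tsub_le_self)).trans_lt
        (hmany γ hγ)
  obtain ⟨x, hx⟩ := hne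
  have hcoeff := hg x hx
  rw [hconst, eval_C] at hcoeff
  rw [hconst, hcoeff, map_zero]

open Classical in
theorem card_le_of_vanishes_on_joints {𝓒 : Finset (PolyCurve n)} (hdeg : ∀ γ ∈ 𝓒, γ.DegLE d)
    {S : Finset (Fin n → ℝ)} (hS : ∀ x ∈ S, IsCurveJoint 𝓒 x) {g : MvPolynomial (Fin n) ℝ}
    (hg0 : g ≠ 0) (hg : ∀ x ∈ S, eval x g = 0) : #S ≤ #𝓒 * (g.totalDegree * d) := by
  induction 𝓒 using Finset.strongInduction generalizing S with
  | H 𝓒 IH =>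
  rcases S.eq_empty_or_nonempty with rfl | hne
  · simp
  obtain ⟨γ, hγ, hfew⟩ : ∃ γ ∈ 𝓒, #{x ∈ S | x ∈ γ.carrier} ≤ g.totalDegree * d := by
    by_contra! hmany
    exact hg0 (eq_zero_of_vanishes_on_joints hdeg hS hne g hg hmany)
  have hrest : #{x ∈ S | x ∉ γ.carrier} ≤ #(𝓒.erase γ) * (g.totalDegree * d) := by
    refine IH _ (erase_ssubset hγ) (fun γ' hγ' => hdeg γ' (mem_of_mem_erase hγ'))
      (fun x hx => ?_) (fun x hx => hg x (mem_filter.mp hx).1)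
    obtain ⟨hxS, hxγ⟩ := mem_filter.mp hx
    obtain ⟨c, τ, hc, hcx, hli⟩ := hS x hxS
    refine ⟨c, τ, fun i => mem_erase.mpr ⟨fun h => hxγ ⟨τ i, h ▸ hcx i⟩, hc i⟩, hcx, hli⟩
  calc #S = #{x ∈ S | x ∈ γ.carrier} + #{x ∈ S | x ∉ γ.carrier} :=
        (card_filter_add_card_filter_not _).symm
    _ ≤ (1 + #(𝓒.erase γ)) * (g.totalDegree * d) := by rw [add_mul, one_mul]; gcongr
    _ = #𝓒 * (g.totalDegree * d) := by rw [add_comm, card_erase_add_one hγ]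

theorem le_rpow_of_forall_lt_succ_pow {k : ℕ} {A : ℝ} (hn : 2 ≤ n) (hA : 0 ≤ A)
    (h : ∀ D : ℕ, k < (D + 1) ^ n → (k : ℝ) ≤ A * D) : (k : ℝ) ≤ A ^ ((n : ℝ) / (n - 1)) := by
  have hn' : (1 : ℝ) < n := by exact_mod_cast hn
  set r := (k : ℝ) ^ (n : ℝ)⁻¹
  have hr0 : 0 ≤ r := by positivity
  have hrn : r ^ n = k := Real.rpow_inv_natCast_pow (Nat.cast_nonneg k) (by omega)
  have hkr : r ^ n ≤ A * r := by
    refine hrn ▸ (h ⌊r⌋₊ ?_).trans (mul_le_mul_of_nonneg_left (Nat.floor_le hr0) hA)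
    exact_mod_cast hrn ▸ pow_lt_pow_left₀ (Nat.lt_floor_add_one r) hr0 (by omega)
  rcases hr0.eq_or_lt with hr | hr
  · rw [← hrn, ← hr, zero_pow (by omega)]
    positivity
  have hrA : r ^ (n - 1) ≤ A := by
    rw [← mul_le_mul_iff_left₀ hr, ← pow_succ, Nat.sub_add_cancel (by omega)]
    exact hkr
  calc (k : ℝ) = (r ^ (n - 1)) ^ ((n : ℝ) / (n - 1)) := by
        rw [← Real.rpow_natCast, ← Real.rpow_mul hr0, Nat.cast_sub (by omega), Nat.cast_one,
          mul_div_cancel₀ _ (by linarith), Real.rpow_natCast, hrn]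
    _ ≤ A ^ ((n : ℝ) / (n - 1)) := by gcongr

theorem stmt_16 (n : ℕ) (hn : 2 ≤ n) :
    ∃ C : ℝ, 0 < C ∧
      ∀ (d : ℕ) (𝓒 : Finset (PolyCurve n)),
        (∀ γ ∈ 𝓒, γ.Smooth ∧ γ.DegLE d) →
        (({x | IsCurveJoint 𝓒 x}).ncard : ℝ) ≤
          C * (𝓒.card : ℝ) ^ ((n : ℝ) / (n - 1)) * (d : ℝ) ^ ((n : ℝ) / (n - 1)) := by
  refine ⟨(n : ℝ) ^ ((n : ℝ) / (n - 1)), by positivity, fun d 𝓒 h𝓒 => ?_⟩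
  rw [mul_assoc, ← Real.mul_rpow (by positivity) (by positivity),
    ← Real.mul_rpow (by positivity) (by positivity)]
  rcases Set.finite_or_infinite {x | IsCurveJoint 𝓒 x} with hfin | hinf
  swap
  · rw [hinf.ncard, Nat.cast_zero]
    positivity
  rw [Set.ncard_eq_toFinset_card _ hfin]
  refine le_rpow_of_forall_lt_succ_pow hn (by positivity) fun D hD => ?_
  obtain ⟨g, hg0, hg_deg, hg⟩ :=
    exists_ne_zero_totalDegree_le_forall_eval_eq_zero hfin.toFinset (by simpa using hD)
  have hjoints : ∀ x ∈ hfin.toFinset, IsCurveJoint 𝓒 x := by simp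
  have hcard : #hfin.toFinset ≤ n * (#𝓒 * d) * D :=
    calc #hfin.toFinset ≤ #𝓒 * (g.totalDegree * d) :=
          card_le_of_vanishes_on_joints (fun γ hγ => (h𝓒 γ hγ).2) hjoints hg0 hg
      _ ≤ #𝓒 * (n * D * d) := by gcongr; simpa using hg_deg
      _ = n * (#𝓒 * d) * D := by ring
  exact_mod_cast hcard
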